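/- Let k be a positive integer, θ > 0, and let J be a random variable distributed as Gamma with shape k and scale θ, independent of a nonnegative real random variable I. Let L(s) = E[exp(−sI)] denote the Laplace transform of I and set ϖ = 1/θ. Then P(J > I) = Σ_{j=0}^{k−1} ((−ϖ)^j / j!) · L^{(j)}(ϖ), where L^{(j)} is the j-th derivative of L. -/

import Mathlib

/-!
By independence, `P(J > I)` is the expectation of `x ↦ P(J > x)` at `x = I`, where `J` has rate `ϖ`.
For integer shape this tail is the Erlang sum `∑_{j<k} (ϖx)^j / j! · e^{-ϖx}` (its derivative
telescopes to minus the density), and each summand is `(-ϖ)^j / j!` times `(-x)^j e^{-ϖx}`, whose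
expectation is the `j`-th derivative at `ϖ` of `L(s) = E[e^{-sI}]`, i.e. of `mgf (-I)`.
-/

open MeasureTheory ProbabilityTheory Finset

open Real Filter Topology
open scoped Nat

/-- `P(Gamma(k, r) > y) = P(Poisson(r y) < k)` for integer shape `k` and rate `r`. -/
noncomputable def erlangTail (k : ℕ) (r y : ℝ) : ℝ :=
  ∑ j ∈ range k, (r * y) ^ j / j ! * exp (-(r * y))

lemma erlangTail_nonneg (k : ℕ) {r y : ℝ} (hr : 0 ≤ r) (hy : 0 ≤ y) : 0 ≤ erlangTail k r y :=
  sum_nonneg fun _ _ => by positivity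

lemma continuous_erlangTail (k : ℕ) (r : ℝ) : Continuous (erlangTail k r) := by
  unfold erlangTail; fun_prop

lemma hasDerivAt_erlangTail_succ (m : ℕ) (r y : ℝ) :
    HasDerivAt (erlangTail (m + 1) r) (-(r * ((r * y) ^ m / m ! * exp (-(r * y))))) y := by
  have hlin : HasDerivAt (fun t => r * t) r y := by simpa using (hasDerivAt_id y).const_mul r
  have hexp : HasDerivAt (fun t => exp (-(r * t))) (exp (-(r * y)) * -r) y := hlin.neg.exp
  induction m with
  | zero =>
    rw [show erlangTail 1 r = fun t => exp (-(r * t)) from funext fun t => by simp [erlangTail]]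
    exact hexp.congr_deriv (by ring)
  | succ n ih =>
    have hpow : HasDerivAt (fun t => (r * t) ^ (n + 1)) ((n + 1 : ℕ) * (r * y) ^ n * r) y :=
      hlin.pow (n + 1)
    rw [show erlangTail (n + 1 + 1) r = fun t => erlangTail (n + 1) r t +
        (r * t) ^ (n + 1) / (n + 1)! * exp (-(r * t)) from
      funext fun t => sum_range_succ _ _]
    refine (ih.add ((hpow.div_const _).mul hexp)).congr_deriv ?_
    rw [Nat.factorial_succ]
    push_cast
    field_simp
    ring

lemma tendsto_erlangTail_atTop (k : ℕ) {r : ℝ} (hr : 0 < r) :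
    Tendsto (erlangTail k r) atTop (𝓝 0) := by
  rw [← sum_const_zero (s := range k)]
  refine tendsto_finsetSum _ fun j _ => ?_
  have h := ((tendsto_pow_mul_exp_neg_atTop_nhds_zero j).comp
    (tendsto_id.const_mul_atTop hr)).div_const (j ! : ℝ)
  rw [zero_div] at h
  exact h.congr fun t => by simp only [Function.comp_apply, id]; ring

/-- Holds because Mathlib's `Gamma 0 = 0` makes the shape-`0` density vanish. -/
lemma gammaMeasure_zero_left (r : ℝ) : gammaMeasure 0 r = 0 := by
  have : gammaPDF 0 r = 0 := funext fun x => by simp [gammaPDF, gammaPDFReal]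
  simp [gammaMeasure, this]

lemma gammaPDFReal_natCast_succ (m : ℕ) (r : ℝ) {x : ℝ} (hx : 0 ≤ x) :
    gammaPDFReal (m + 1 : ℕ) r x = r * ((r * x) ^ m / m ! * exp (-(r * x))) := by
  rw [gammaPDFReal, if_pos hx, Real.rpow_natCast, Nat.cast_add_one, Real.Gamma_nat_eq_factorial,
    add_sub_cancel_right, Real.rpow_natCast]
  ring

lemma gammaMeasure_Ioi_eq_erlangTail (k : ℕ) {r : ℝ} (hr : 0 < r) {y : ℝ} (hy : 0 ≤ y) :
    gammaMeasure k r (Set.Ioi y) = ENNReal.ofReal (erlangTail k r y) := by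
  cases k with
  | zero => simp [gammaMeasure_zero_left, erlangTail]
  | succ m =>
    set f : ℝ → ℝ := fun x => r * ((r * x) ^ m / m ! * exp (-(r * x)))
    have hderiv : ∀ x ∈ Set.Ici y, HasDerivAt (-erlangTail (m + 1) r) (f x) x :=
      fun x _ => (hasDerivAt_erlangTail_succ m r x).neg.congr_deriv (neg_neg _)
    have hf : ∀ x ∈ Set.Ioi y, 0 ≤ f x := fun x hx => by
      have : 0 ≤ x := hy.trans hx.out.le
      positivity
    have hlim := (tendsto_erlangTail_atTop (m + 1) hr).neg
    rw [neg_zero] at hlim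
    have hint : IntegrableOn f (Set.Ioi y) := integrableOn_Ioi_deriv_of_nonneg' hderiv hf hlim
    rw [gammaMeasure, withDensity_apply _ measurableSet_Ioi,
      setLIntegral_congr_fun measurableSet_Ioi (g := fun x => ENNReal.ofReal (f x))
        fun x hx => by rw [gammaPDF, gammaPDFReal_natCast_succ m r (hy.trans hx.out.le)],
      ← ofReal_integral_eq_lintegral_ofReal hint ((ae_restrict_iff' measurableSet_Ioi).2
        (ae_of_all _ hf)),
      integral_Ioi_of_hasDerivAt_of_tendsto' hderiv hint hlim, zero_sub, Pi.neg_apply, neg_neg]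

lemma measure_lt_eq_lintegral_map_Ioi {Ω : Type*} [MeasurableSpace Ω] {μ : Measure Ω}
    [IsFiniteMeasure μ] {X Y : Ω → ℝ} (hX : AEMeasurable X μ) (hY : AEMeasurable Y μ)
    (hXY : IndepFun X Y μ) :
    μ {ω | X ω < Y ω} = ∫⁻ x, μ.map Y (Set.Ioi x) ∂μ.map X := by
  have hlt : MeasurableSet {p : ℝ × ℝ | p.1 < p.2} := measurableSet_lt measurable_fst measurable_snd
  change μ ((fun ω => (X ω, Y ω)) ⁻¹' {p : ℝ × ℝ | p.1 < p.2}) = _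
  rw [← Measure.map_apply_of_aemeasurable (hX.prodMk hY) hlt,
    (indepFun_iff_map_prod_eq_prod_map_map hX hY).1 hXY, Measure.prod_apply hlt]
  rfl

lemma Ioi_subset_interior_integrableExpSet_of_nonpos {Ω : Type*} [MeasurableSpace Ω]
    {μ : Measure Ω} [IsFiniteMeasure μ] {X : Ω → ℝ} (hX : AEMeasurable X μ)
    (hX0 : ∀ᵐ ω ∂μ, X ω ≤ 0) :
    Set.Ioi 0 ⊆ interior (integrableExpSet X μ) := by
  rw [← interior_Ici]
  refine interior_mono fun t (ht : 0 ≤ t) => (integrable_const (1 : ℝ)).mono'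
    (by fun_prop) ?_
  filter_upwards [hX0] with ω hω
  rw [Real.norm_of_nonneg (exp_pos _).le, exp_le_one_iff]
  exact mul_nonpos_of_nonneg_of_nonpos ht hω

lemma integral_erlangTail_eq_sum_iteratedDeriv_laplace {Ω : Type*} [MeasurableSpace Ω]
    {μ : Measure Ω} [IsFiniteMeasure μ] {X : Ω → ℝ} (hX : AEMeasurable X μ)
    (hX0 : ∀ᵐ ω ∂μ, 0 ≤ X ω) (k : ℕ) {r : ℝ} (hr : 0 < r) :
    ∫ ω, erlangTail k r (X ω) ∂μ =
      ∑ j ∈ range k, (-r) ^ j / j ! * iteratedDeriv j (fun s => ∫ ω, exp (-s * X ω) ∂μ) r := by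
  have hmem : r ∈ interior (integrableExpSet (fun ω => -X ω) μ) :=
    Ioi_subset_interior_integrableExpSet_of_nonpos hX.neg
      (by filter_upwards [hX0] with ω hω using neg_nonpos.2 hω) hr
  have hL : (fun s => ∫ ω, exp (-s * X ω) ∂μ) = mgf (fun ω => -X ω) μ := by
    ext s; simp only [mgf, neg_mul, mul_neg]
  have hterm (j : ℕ) (y : ℝ) : (r * y) ^ j / j ! * exp (-(r * y)) =
      (-r) ^ j / j ! * ((-y) ^ j * exp (r * -y)) := by
    rw [mul_neg, ← neg_mul_neg r y, mul_pow]; ring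
  simp_rw [hL, iteratedDeriv_mgf hmem, ← integral_const_mul, erlangTail, hterm]
  exact integral_finsetSum _ fun j _ =>
    (integrable_pow_mul_exp_of_mem_interior_integrableExpSet hmem j).const_mul _

theorem gamma_exceeds_interference_prob_general
    {Ω : Type*} [MeasureSpace Ω] [IsProbabilityMeasure (ℙ : Measure Ω)]
    (k : ℕ) (θ : ℝ) (hθ : 0 < θ)
    (J I : Ω → ℝ) (hJ : Measurable J) (hI : Measurable I) (hI0 : ∀ a, 0 ≤ I a)
    (hindep : IndepFun J I ℙ)
    (hlaw : Measure.map J ℙ = gammaMeasure k (1 / θ))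
    (L : ℝ → ℝ) (hL : L = fun s => ∫ a, Real.exp (-s * I a) ∂ℙ)
    (ϖ : ℝ) (hϖ : ϖ = 1 / θ) :
    (ℙ {a : Ω | J a > I a}).toReal =
      ∑ j ∈ Finset.range k, ((-ϖ) ^ j / j.factorial) * iteratedDeriv j L ϖ := by
  have hϖ0 : 0 < ϖ := hϖ ▸ one_div_pos.2 hθ
  have hI0_map : ∀ᵐ x ∂(ℙ : Measure Ω).map I, 0 ≤ x :=
    (ae_map_iff hI.aemeasurable measurableSet_Ici).2 (ae_of_all _ hI0)
  have hcover : ℙ {a : Ω | J a > I a} = ∫⁻ a, ENNReal.ofReal (erlangTail k ϖ (I a)) := by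
    rw [← lintegral_map ((continuous_erlangTail k ϖ).measurable.ennreal_ofReal) hI]
    refine (measure_lt_eq_lintegral_map_Ioi hI.aemeasurable hJ.aemeasurable hindep.symm).trans
      (lintegral_congr_ae ?_)
    filter_upwards [hI0_map] with x hx
    rw [hlaw, ← hϖ, gammaMeasure_Ioi_eq_erlangTail k hϖ0 hx]
  rw [hcover, ← integral_eq_lintegral_of_nonneg_ae
      (ae_of_all _ fun a => erlangTail_nonneg k hϖ0.le (hI0 a))
      ((continuous_erlangTail k ϖ).comp_aestronglyMeasurable hI.aestronglyMeasurable),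
    integral_erlangTail_eq_sum_iteratedDeriv_laplace hI.aemeasurable (ae_of_all _ hI0) k hϖ0, hL]

/-- Coverage probability via the Laplace transform of the interference: if `J ~ Gamma(k, θ)`
with integer shape `k` is independent of the nonnegative random variable `I`, and
`L(s) = E[exp(−sI)]` with `ϖ = 1/θ`, then
`P(J > I) = ∑_{j=0}^{k−1} ((−ϖ)^j / j!) L^(j)(ϖ)`. -/
theorem gamma_exceeds_interference_prob
    {Ω : Type*} [MeasureSpace Ω] [IsProbabilityMeasure (ℙ : Measure Ω)]
    (k : ℕ) (hk : 0 < k) (θ : ℝ) (hθ : 0 < θ)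
    (J I : Ω → ℝ) (hJ : Measurable J) (hI : Measurable I) (hI0 : ∀ a, 0 ≤ I a)
    (hindep : IndepFun J I ℙ)
    (hlaw : Measure.map J ℙ = gammaMeasure k (1 / θ))
    (L : ℝ → ℝ) (hL : L = fun s => ∫ a, Real.exp (-s * I a) ∂ℙ)
    (ϖ : ℝ) (hϖ : ϖ = 1 / θ) :
    (ℙ {a : Ω | J a > I a}).toReal =
      ∑ j ∈ Finset.range k, ((-ϖ) ^ j / j.factorial) * iteratedDeriv j L ϖ :=
  gamma_exceeds_interference_prob_general k θ hθ J I hJ hI hI0 hindep hlaw L hL ϖ hϖ
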